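/- arXiv:2204.07325 — 2 statements merged into one kernel-verified Lean document; each statement's English description precedes it below -/
import Mathlib

section
/- Let a, d, k be positive integers with gcd(a,d)=1 and 2 ≤ k ≤ a, let λ ∈ ℂ with λ ≠ 0, λ ≠ 1 and λ^{a} = 1, and let μ be a positive integer. Then s_μ^{(λ)}(a, a+d, …, a+(k−1)d) = (1/(μ+1))·Σ_{n=0}^{μ} C(μ+1,n) B_n a^{n−1} Σ_{i=1}^{a−1} m_i^{μ+1−n} λ^{m_i} + ((−1)^{μ+1}/(λ−1)^{μ+1})·Σ_{j=0}^{μ−1} ⟨μ, j⟩ λ^{j+1}, where m_i is taken with respect to the sequence a, a+d, …, a+(k−1)d. -/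
open Finset

/-- `n` is representable as a nonnegative integer combination of the `a i`. -/
def Representable {k : ℕ} (a : Fin k → ℕ) (n : ℕ) : Prop :=
  ∃ x : Fin k → ℕ, n = ∑ i, x i * a i

/-- The set of positive integers that are not representable. -/
def NRset {k : ℕ} (a : Fin k → ℕ) : Set ℕ :=
  {n | 0 < n ∧ ¬ Representable a n}

/-- Eulerian numbers `⟨n,m⟩ = Σ_{k=0}^{m} (−1)^k C(n+1,k)(m−k+1)^n`. -/
def eulerianNum (n m : ℕ) : ℤ :=
  ∑ k ∈ Finset.range (m + 1), (-1 : ℤ) ^ k * ((n + 1).choose k : ℤ) * ((m - k + 1 : ℕ) : ℤ) ^ n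

/-!
Since `a` is one of the generators and `m i` is the least representable number `≡ i (mod a)`, the
non-representable numbers `≡ i` are exactly `i, i + a, …, m i - a`. The function
`F x = a^μ / (μ + 1) * (B_{μ+1}(x / a) - B_{μ+1})` satisfies `F (x + a) - F x = x ^ μ`, so, as
`λ ^ a = 1`, the class of `i` contributes `λ ^ i * (F (m i) - F i)`; the terms `λ ^ m i * F (m i)`
form the Bernoulli sum. For the rest, `T x = ∑_{i<a} λ ^ i * F (x + i)` satisfies
`λ * T (x + 1) - T x = x ^ μ`, and its `(μ + 1)`-st forward difference vanishes because
`∑_{i<a} λ ^ i = 0`. Substituting `λ ^ t * T t = T 0 + ∑_{n<t} λ ^ n * n ^ μ` into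
`λ ^ (μ + 1) * Δ^(μ + 1) T 0 = 0` gives `(1 - λ) ^ (μ + 1) * T 0 = -∑_j ⟨μ, j⟩ λ ^ (j + 1)`.
-/

section Representable
variable {k : ℕ} {g : Fin k → ℕ}

theorem Representable.add {m n : ℕ} (hm : Representable g m) (hn : Representable g n) :
    Representable g (m + n) := by
  obtain ⟨x, rfl⟩ := hm
  obtain ⟨y, rfl⟩ := hn
  exact ⟨x + y, by simp [add_mul, sum_add_distrib]⟩

theorem representable_mul_apply (t : ℕ) (j : Fin k) : Representable g (t * g j) :=
  ⟨Pi.single j t, by simp [Pi.single_apply]⟩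

end Representable

theorem mem_image_add_mul_range_iff {a i Q n : ℕ} (hi : i < a) :
    n ∈ (range Q).image (fun q => i + q * a) ↔ n % a = i ∧ n < i + Q * a := by
  simp only [mem_image, mem_range]
  constructor
  · rintro ⟨q, hq, rfl⟩
    refine ⟨by rw [Nat.add_mul_mod_self_right, Nat.mod_eq_of_lt hi], ?_⟩
    have := Nat.mul_lt_mul_of_pos_right hq ((Nat.zero_le i).trans_lt hi)
    omega
  · rintro ⟨rfl, hn⟩
    refine ⟨n / a, ?_, Nat.mod_add_div' n a⟩
    have := Nat.mod_add_div' n a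
    exact Nat.lt_of_mul_lt_mul_right (a := a) (by omega)

section Apery
variable {k a : ℕ} {g : Fin k → ℕ} {j₀ : Fin k} {m : ℕ → ℕ}

theorem mem_NRset_iff (ha : 0 < a) (hj₀ : g j₀ = a)
    (hm : ∀ i ∈ Icc 1 (a - 1), IsLeast {n | 0 < n ∧ Representable g n ∧ n % a = i} (m i))
    (n : ℕ) : n ∈ NRset g ↔ n % a ≠ 0 ∧ n < m (n % a) := by
  have hlt := Nat.mod_lt n ha
  constructor
  · rintro ⟨hn, hnr⟩
    have hmod : n % a ≠ 0 := fun h => hnr <| by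
      have := representable_mul_apply (g := g) (n / a) j₀
      rwa [hj₀, Nat.div_mul_cancel (Nat.dvd_of_mod_eq_zero h)] at this
    refine ⟨hmod, not_le.mp fun hle => hnr ?_⟩
    obtain ⟨⟨-, hmr, hmm⟩, -⟩ := hm (n % a) (mem_Icc.mpr ⟨by omega, by omega⟩)
    have hdvd : a ∣ n - m (n % a) := (Nat.modEq_iff_dvd' hle).mp hmm
    rw [← Nat.add_sub_cancel' hle, ← Nat.div_mul_cancel hdvd]
    have := hmr.add (representable_mul_apply ((n - m (n % a)) / a) j₀)
    rwa [hj₀] at this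
  · rintro ⟨hmod, hn⟩
    have hn0 : 0 < n := Nat.pos_of_ne_zero (by rintro rfl; simp at hmod)
    refine ⟨hn0, fun hr => ?_⟩
    have := (hm (n % a) (mem_Icc.mpr ⟨by omega, by omega⟩)).2 ⟨hn0, hr, rfl⟩
    omega

theorem finsum_mem_NRset_eq_sum {M : Type*} [AddCommMonoid M] (ha : 0 < a) (hj₀ : g j₀ = a)
    (hm : ∀ i ∈ Icc 1 (a - 1), IsLeast {n | 0 < n ∧ Representable g n ∧ n % a = i} (m i))
    (f : ℕ → M) :
    ∑ᶠ n ∈ NRset g, f n =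
      ∑ i ∈ Icc 1 (a - 1), ∑ q ∈ range (m i / a), f (i + q * a) := by
  have hmem (i : ℕ) (hi : i ∈ Icc 1 (a - 1)) (n : ℕ) :
      n ∈ (range (m i / a)).image (fun q => i + q * a) ↔ n % a = i ∧ n < m i := by
    have hmi := Nat.mod_add_div' (m i) a
    rw [(hm i hi).1.2.2] at hmi
    rw [mem_image_add_mul_range_iff (by have := mem_Icc.mp hi; omega), hmi]
  have hset : NRset g = ↑((Icc 1 (a - 1)).biUnion
      fun i => (range (m i / a)).image (fun q => i + q * a)) := by
    ext n
    rw [mem_NRset_iff ha hj₀ hm, mem_coe, mem_biUnion]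
    constructor
    · rintro ⟨hmod, hn⟩
      have hi : n % a ∈ Icc 1 (a - 1) :=
        mem_Icc.mpr ⟨by omega, by have := Nat.mod_lt n ha; omega⟩
      exact ⟨n % a, hi, (hmem _ hi n).mpr ⟨rfl, hn⟩⟩
    · rintro ⟨i, hi, hn⟩
      obtain ⟨rfl, hn⟩ := (hmem i hi n).mp hn
      exact ⟨by have := mem_Icc.mp hi; omega, hn⟩
  rw [hset, finsum_mem_coe_finset, sum_biUnion]
  · refine sum_congr rfl fun i hi => sum_image fun q _ q' _ h => ?_
    have : q * a = q' * a := by simpa using h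
    exact Nat.eq_of_mul_eq_mul_right ha this
  · intro i hi i' hi' hne
    refine disjoint_left.mpr fun n hn hn' => hne ?_
    rw [← ((hmem i hi n).mp hn).1, ((hmem i' hi' n).mp hn').1]

end Apery

open fwdDiff

section Faulhaber
variable {K : Type*} [Field K]

noncomputable def faulhaber (a μ : ℕ) (x : K) : K :=
  1 / ((μ : K) + 1) * ∑ n ∈ range (μ + 1),
    ((μ + 1).choose n : K) * ((bernoulli n : ℚ) : K) * (a : K) ^ ((n : ℤ) - 1) *
      x ^ (μ + 1 - n)

theorem aeval_bernoulli_one_add [CharZero K] (n : ℕ) (y : K) :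
    Polynomial.aeval (1 + y) (Polynomial.bernoulli n) =
      Polynomial.aeval y (Polynomial.bernoulli n) + n * y ^ (n - 1) := by
  simpa [Polynomial.aeval_comp] using
    congrArg (Polynomial.aeval y) (Polynomial.bernoulli_comp_one_add_X n)

theorem faulhaber_eq_aeval_bernoulli [CharZero K] {a : ℕ} (ha : a ≠ 0) (μ : ℕ) (x : K) :
    faulhaber a μ x = (a : K) ^ μ / (μ + 1) *
      (Polynomial.aeval (x / a) (Polynomial.bernoulli (μ + 1)) - bernoulli (μ + 1)) := by
  have ha' : (a : K) ≠ 0 := Nat.cast_ne_zero.mpr ha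
  simp only [Polynomial.bernoulli, map_sum, Polynomial.aeval_monomial, eq_ratCast]
  rw [sum_range_succ, Nat.choose_self, Nat.sub_self, pow_zero, Nat.cast_one, Rat.cast_mul,
    Rat.cast_one, mul_one, mul_one, add_sub_cancel_right, faulhaber, mul_sum, mul_sum]
  refine sum_congr rfl fun n hn => ?_
  have hn' : n + (μ + 1 - n) = μ + 1 := Nat.add_sub_cancel' (mem_range.mp hn).le
  rw [zpow_sub₀ ha', zpow_natCast, zpow_one, div_pow]
  have hpow : (a : K) ^ n * a ^ (μ + 1 - n) = a * a ^ μ := by rw [← pow_add, hn', pow_succ']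
  field_simp
  push_cast
  linear_combination ((μ + 1).choose n * (bernoulli n : K) * x ^ (μ + 1 - n)) * hpow

theorem faulhaber_add_sub [CharZero K] {a : ℕ} (ha : a ≠ 0) (μ : ℕ) (x : K) :
    faulhaber a μ (x + a) - faulhaber a μ x = x ^ μ := by
  have ha' : (a : K) ≠ 0 := Nat.cast_ne_zero.mpr ha
  rw [faulhaber_eq_aeval_bernoulli ha, faulhaber_eq_aeval_bernoulli ha, add_div, div_self ha',
    add_comm (x / a), aeval_bernoulli_one_add, div_pow]
  field_simp
  push_cast
  ring

theorem sum_range_pow_add_mul_eq_faulhaber_sub [CharZero K] {a : ℕ} (ha : a ≠ 0)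
    (μ i Q : ℕ) :
    ∑ q ∈ range Q, ((i + q * a : ℕ) : K) ^ μ =
      faulhaber a μ ((i + Q * a : ℕ) : K) - faulhaber a μ (i : K) := by
  have htel := sum_range_sub (fun q => faulhaber a μ ((i + q * a : ℕ) : K)) Q
  rw [zero_mul, add_zero] at htel
  rw [← htel]
  refine sum_congr rfl fun q _ => ?_
  rw [← faulhaber_add_sub ha]
  push_cast
  ring_nf

theorem fwdDiff_iter_faulhaber (a μ : ℕ) : (Δ_[1])^[μ + 2] (faulhaber a μ : K → K) = 0 := by
  have : (faulhaber a μ : K → K) = (1 / ((μ : K) + 1)) • ∑ n ∈ range (μ + 1),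
      (((μ + 1).choose n : K) * ((bernoulli n : ℚ) : K) * (a : K) ^ ((n : ℤ) - 1)) •
        fun x : K => x ^ (μ + 1 - n) := by
    ext x
    simp [faulhaber, Finset.sum_apply]
  rw [this, fwdDiff_iter_const_smul, fwdDiff_iter_finsetSum]
  refine smul_eq_zero_of_right _ (sum_eq_zero fun n hn => ?_)
  rw [fwdDiff_iter_const_smul]
  refine smul_eq_zero_of_right _ ?_
  exact fwdDiff_iter_pow_eq_zero_of_lt (by have := mem_range.mp hn; omega)

theorem faulhaber_zero (a μ : ℕ) : faulhaber a μ (0 : K) = 0 := by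
  rw [faulhaber]
  refine mul_eq_zero_of_right _ (sum_eq_zero fun n hn => ?_)
  rw [zero_pow (by have := mem_range.mp hn; omega), mul_zero]

theorem sum_mul_faulhaber_eq {ι : Type*} (s : Finset ι) (w x : ι → K) (a μ : ℕ) :
    ∑ i ∈ s, w i * faulhaber a μ (x i) = 1 / ((μ : K) + 1) * ∑ n ∈ range (μ + 1),
      ((μ + 1).choose n : K) * ((bernoulli n : ℚ) : K) * (a : K) ^ ((n : ℤ) - 1) *
        ∑ i ∈ s, x i ^ (μ + 1 - n) * w i := by
  simp only [faulhaber, mul_sum]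
  rw [sum_comm]
  exact sum_congr rfl fun n _ => sum_congr rfl fun i _ => by ring

end Faulhaber

section WeightedDifference
variable {R : Type*} [CommRing R]

theorem sum_choose_mul_sum_range_eq (N : ℕ) (l : R) (c : ℕ → R) :
    ∑ k ∈ range (N + 1), (N.choose k : R) * (-l) ^ (N - k) * ∑ n ∈ range k, l ^ n * c n =
      ∑ p ∈ range N, l ^ p *
        ∑ s ∈ range (p + 1), (-1) ^ s * (N.choose s : R) * c (p - s) := by
  set f : ℕ → ℕ → R := fun s n => (-1) ^ s * (N.choose s : R) * l ^ (s + n) * c n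
  rw [← sum_range_reflect, sum_range_succ, Nat.add_sub_cancel, Nat.sub_self, range_zero,
    sum_empty, mul_zero, add_zero]
  calc _ = ∑ s ∈ range N, ∑ n ∈ range (N - s), f s n := by
        refine sum_congr rfl fun s hs => ?_
        have hsN : s ≤ N := (mem_range.mp hs).le
        rw [Nat.sub_sub_self hsN, Nat.choose_symm hsN, mul_sum]
        refine sum_congr rfl fun n _ => ?_
        simp only [f]
        rw [neg_pow, pow_add]
        ring
    _ = ∑ p ∈ range N, ∑ s ∈ range (p + 1), f s (p - s) := (sum_range_diag_flip N f).symm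
    _ = _ := by
        refine sum_congr rfl fun p _ => ?_
        rw [mul_sum]
        refine sum_congr rfl fun s hs => ?_
        simp only [f, Nat.add_sub_cancel' (Nat.lt_succ_iff.mp (mem_range.mp hs))]
        ring

theorem pow_mul_apply_eq_add_sum {l : R} {T : R → R} {c : ℕ → R}
    (hT : ∀ n : ℕ, l * T (n + 1) - T n = c n) (t : ℕ) :
    l ^ t * T t = T 0 + ∑ n ∈ range t, l ^ n * c n := by
  induction t with
  | zero => simp
  | succ t ih =>
    rw [sum_range_succ, ← add_assoc, ← ih, ← hT t]
    push_cast
    ring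

theorem pow_mul_fwdDiff_iter_apply_zero {l : R} {T : R → R} {c : ℕ → R}
    (hT : ∀ n : ℕ, l * T (n + 1) - T n = c n) (N : ℕ) :
    l ^ N * (Δ_[1])^[N] T 0 = (1 - l) ^ N * T 0 +
      ∑ p ∈ range N, l ^ p *
        ∑ s ∈ range (p + 1), (-1) ^ s * (N.choose s : R) * c (p - s) := by
  rw [← sum_choose_mul_sum_range_eq, fwdDiff_iter_eq_sum_shift, mul_sum, sub_eq_add_neg, add_pow,
    sum_mul, ← sum_add_distrib]
  refine sum_congr rfl fun k hk => ?_
  rw [zero_add, nsmul_one, zsmul_eq_mul,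
    ← pow_sub_mul_pow l (Nat.lt_succ_iff.mp (mem_range.mp hk)), mul_assoc (l ^ (N - k)),
    mul_left_comm (l ^ k), pow_mul_apply_eq_add_sum hT]
  push_cast
  ring

theorem sum_pow_mul_sum_choose_eq_eulerianNum {μ : ℕ} (hμ : 0 < μ) (l : R) :
    ∑ p ∈ range (μ + 1), l ^ p *
        ∑ s ∈ range (p + 1), (-1) ^ s * ((μ + 1).choose s : R) * ((p - s : ℕ) : R) ^ μ =
      ∑ j ∈ range μ, (eulerianNum μ j : R) * l ^ (j + 1) := by
  rw [sum_range_succ', sum_range_one]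
  simp only [Nat.sub_self, Nat.cast_zero, zero_pow hμ.ne', mul_zero, add_zero]
  refine sum_congr rfl fun j _ => ?_
  rw [sum_range_succ, Nat.sub_self, Nat.cast_zero, zero_pow hμ.ne', mul_zero, add_zero,
    mul_comm, eulerianNum]
  push_cast
  refine congrArg (· * _) (sum_congr rfl fun s hs => ?_)
  rw [Nat.succ_sub (Nat.lt_succ_iff.mp (mem_range.mp hs)), Nat.cast_succ]

end WeightedDifference

section RootOfUnityWeights
variable {K : Type*} [Field K] {a : ℕ} {l : K}

theorem mul_sum_pow_mul_add_one_sub (hla : l ^ a = 1) (F : K → K) (x : K) :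
    l * ∑ i ∈ range a, l ^ i * F (x + 1 + i) - ∑ i ∈ range a, l ^ i * F (x + i) =
      F (x + a) - F x := by
  have hshift : l * ∑ i ∈ range a, l ^ i * F (x + 1 + i) =
      ∑ i ∈ range a, l ^ (i + 1) * F (x + (i + 1 : ℕ)) := by
    rw [mul_sum]
    refine sum_congr rfl fun i _ => ?_
    push_cast
    ring_nf
  rw [hshift, eq_sub_of_add_eq (sum_range_succ' (fun i => l ^ i * F (x + i)) a).symm,
    eq_sub_of_add_eq (sum_range_succ (fun i => l ^ i * F (x + i)) a).symm, hla]
  simp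

theorem fwdDiff_iter_sum_geom_mul_eq_zero (hla : l ^ a = 1) (hl1 : l ≠ 1) {F : K → K} {N : ℕ}
    (hF : (Δ_[1])^[N + 1] F = 0) :
    (Δ_[1])^[N] (fun x => ∑ i ∈ range a, l ^ i * F (x + i)) 0 = 0 := by
  have hper : Function.Periodic ((Δ_[1])^[N] F) 1 := fun x => by
    have h := congrFun hF x
    rwa [Function.iterate_succ_apply', fwdDiff, Pi.zero_apply, sub_eq_zero] at h
  have hsum : (fun x => ∑ i ∈ range a, l ^ i * F (x + i)) =
      ∑ i ∈ range a, l ^ i • fun x => F (x + i) := by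
    ext x
    simp [Finset.sum_apply]
  rw [hsum, fwdDiff_iter_finsetSum, Finset.sum_apply]
  simp only [fwdDiff_iter_const_smul, Pi.smul_apply, fwdDiff_iter_comp_add, zero_add, smul_eq_mul]
  have hconst (i : ℕ) : (Δ_[1])^[N] F i = (Δ_[1])^[N] F 0 := by
    simpa using hper.nat_mul_eq i
  simp only [hconst, ← sum_mul, geom_sum_eq hl1, hla, sub_self, zero_div, zero_mul]

theorem one_sub_pow_mul_sum_eq_neg_sum_eulerianNum {μ : ℕ} (hμ : 0 < μ) (hla : l ^ a = 1)
    (hl1 : l ≠ 1) {F : K → K} (hF : ∀ n : ℕ, F (n + a) - F n = (n : K) ^ μ)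
    (hΔ : (Δ_[1])^[μ + 2] F = 0) :
    (1 - l) ^ (μ + 1) * ∑ i ∈ range a, l ^ i * F i =
      -∑ j ∈ range μ, (eulerianNum μ j : K) * l ^ (j + 1) := by
  set T : K → K := fun x => ∑ i ∈ range a, l ^ i * F (x + i)
  have hT (n : ℕ) : l * T (n + 1) - T n = (n : K) ^ μ := by
    rw [← hF n]
    exact mul_sum_pow_mul_add_one_sub hla F n
  have key := pow_mul_fwdDiff_iter_apply_zero hT (μ + 1)
  rw [fwdDiff_iter_sum_geom_mul_eq_zero hla hl1 hΔ, mul_zero,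
    sum_pow_mul_sum_choose_eq_eulerianNum hμ] at key
  simp only [T, zero_add] at key
  linear_combination -key

theorem sum_range_pow_mul_add_mul_eq [CharZero K] (ha : a ≠ 0) (hla : l ^ a = 1) (μ i Q : ℕ) :
    ∑ q ∈ range Q, l ^ (i + q * a) * ((i + q * a : ℕ) : K) ^ μ =
      l ^ (i + Q * a) * faulhaber a μ ((i + Q * a : ℕ) : K) -
        l ^ i * faulhaber a μ (i : K) := by
  have hl (q : ℕ) : l ^ (i + q * a) = l ^ i := by rw [pow_add, pow_mul', hla, one_pow, mul_one]
  simp only [hl]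
  rw [← mul_sum, sum_range_pow_add_mul_eq_faulhaber_sub ha, mul_sub]

theorem sum_Icc_pow_mul_faulhaber_eq [CharZero K] (ha : 0 < a) (hla : l ^ a = 1) (hl1 : l ≠ 1)
    {μ : ℕ} (hμ : 0 < μ) :
    ∑ i ∈ Icc 1 (a - 1), l ^ i * faulhaber a μ (i : K) =
      -((-1) ^ (μ + 1) / (l - 1) ^ (μ + 1) *
        ∑ j ∈ range μ, (eulerianNum μ j : K) * l ^ (j + 1)) := by
  have key := one_sub_pow_mul_sum_eq_neg_sum_eulerianNum hμ hla hl1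
    (fun n => faulhaber_add_sub ha.ne' μ (n : K)) (fwdDiff_iter_faulhaber a μ)
  rw [range_eq_Ico, sum_eq_sum_Ico_succ_bot ha, Nat.cast_zero, faulhaber_zero, mul_zero,
    zero_add, ← Icc_sub_one_right_eq_Ico_of_not_isMin (by simpa using ha.ne')] at key
  have hne : (1 - l) ^ (μ + 1) ≠ 0 := pow_ne_zero _ (sub_ne_zero.mpr hl1.symm)
  rw [← neg_sub 1 l, neg_pow (1 - l), div_mul_cancel_left₀ (by simp)]
  field_simp
  linear_combination key

end RootOfUnityWeights

theorem stmt17_general (a d k : ℕ) (ha : 0 < a)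
    (hk : 2 ≤ k)
    (m : ℕ → ℕ)
    (hm : ∀ i ∈ Finset.Icc 1 (a - 1),
      IsLeast {n : ℕ | 0 < n ∧
        Representable (fun j : Fin k => a + (j : ℕ) * d) n ∧ n % a = i} (m i))
    (lam : ℂ) (hl1 : lam ≠ 1) (hla : lam ^ a = 1)
    (μ : ℕ) (hμ : 0 < μ) :
    ∑ᶠ n ∈ NRset (fun j : Fin k => a + (j : ℕ) * d), lam ^ n * (n : ℂ) ^ μ =
      (1 / ((μ : ℂ) + 1)) * ∑ n ∈ Finset.range (μ + 1),
        ((μ + 1).choose n : ℂ) * ((bernoulli n : ℚ) : ℂ) * (a : ℂ) ^ ((n : ℤ) - 1) *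
          ∑ i ∈ Finset.Icc 1 (a - 1), (m i : ℂ) ^ (μ + 1 - n) * lam ^ (m i)
        + ((-1 : ℂ) ^ (μ + 1) / (lam - 1) ^ (μ + 1)) *
            ∑ j ∈ Finset.range μ, (eulerianNum μ j : ℂ) * lam ^ (j + 1) := by
  rw [finsum_mem_NRset_eq_sum ha (j₀ := ⟨0, by omega⟩) (by simp) hm]
  have hinner : ∀ i ∈ Icc 1 (a - 1),
      ∑ q ∈ range (m i / a), lam ^ (i + q * a) * ((i + q * a : ℕ) : ℂ) ^ μ =
        lam ^ m i * faulhaber a μ (m i : ℂ) - lam ^ i * faulhaber a μ (i : ℂ) := by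
    intro i hi
    obtain ⟨⟨-, -, hmod⟩, -⟩ := hm i hi
    have hmi := Nat.mod_add_div' (m i) a
    rw [hmod] at hmi
    rw [sum_range_pow_mul_add_mul_eq ha.ne' hla, hmi]
  rw [sum_congr rfl hinner, sum_sub_distrib, sum_mul_faulhaber_eq,
    sum_Icc_pow_mul_faulhaber_eq ha hla hl1 hμ, sub_neg_eq_add]

/-- Weighted Sylvester power sum for an arithmetic sequence when `λ^a = 1`,
second form. -/
theorem stmt17 (a d k : ℕ) (ha : 0 < a) (hd : 0 < d)
    (hk : 2 ≤ k) (hka : k ≤ a) (hgcd : Nat.gcd a d = 1)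
    (m : ℕ → ℕ)
    (hm : ∀ i ∈ Finset.Icc 1 (a - 1),
      IsLeast {n : ℕ | 0 < n ∧
        Representable (fun j : Fin k => a + (j : ℕ) * d) n ∧ n % a = i} (m i))
    (lam : ℂ) (hl0 : lam ≠ 0) (hl1 : lam ≠ 1) (hla : lam ^ a = 1)
    (μ : ℕ) (hμ : 0 < μ) :
    ∑ᶠ n ∈ NRset (fun j : Fin k => a + (j : ℕ) * d), lam ^ n * (n : ℂ) ^ μ =
      (1 / ((μ : ℂ) + 1)) * ∑ n ∈ Finset.range (μ + 1),
        ((μ + 1).choose n : ℂ) * ((bernoulli n : ℚ) : ℂ) * (a : ℂ) ^ ((n : ℤ) - 1) *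
          ∑ i ∈ Finset.Icc 1 (a - 1), (m i : ℂ) ^ (μ + 1 - n) * lam ^ (m i)
        + ((-1 : ℂ) ^ (μ + 1) / (lam - 1) ^ (μ + 1)) *
            ∑ j ∈ Finset.range μ, (eulerianNum μ j : ℂ) * lam ^ (j + 1) :=
  stmt17_general a d k ha hk m hm lam hl1 hla μ hμ
end

section
/- Let a be a positive integer, μ a positive integer, and λ ∈ ℂ with λ^{a} = 1 and λ ≠ 1. Then −(1/(μ+1))·Σ_{κ=0}^{μ} C(μ+1,κ) B_κ a^{κ−1} Σ_{i=0}^{a−1} i^{μ+1−κ} λ^{i} = ((−1)^{μ+1}/(λ−1)^{μ+1})·Σ_{j=0}^{μ−1} ⟨μ, j⟩ λ^{j+1}. -/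
open Finset

/-!
Put `F(t) = Σ_{i<a} λ^i e^{it}`. Since `λ^a = 1`, `(λeᵗ - 1) F(t) = e^{at} - 1`, so the Bernoulli
generating function gives `B(at) F(t) = at / (λeᵗ - 1)`. The sum on the left is `(μ+1)!/a` times
the coefficient of `t^{μ+1}` in `B(at) F(t)`.

The Taylor coefficients of `1 / (λeᵗ - 1)` are `-A_n(λ) / ((1 - λ)^{n+1} n!)`, where `A_n` is the
Eulerian polynomial, the numerator of `Σ_i i^n x^i = A_n(x) / (1 - x)^{n+1}`. Multiplying by
`λeᵗ - 1`, this comes down to the recurrence `x Σ_k C(n,k) A_k(x) (1-x)^{n-k} = A_n(x)`, which is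
`(i + 1)^n = Σ_k C(n,k) i^k` read through that generating function.
-/

open PowerSeries Nat

section EulerianPolynomial

variable (R : Type*) [CommRing R]

noncomputable def natPowSeries (n : ℕ) : R⟦X⟧ := mk fun i ↦ (i : R) ^ n

noncomputable def eulerianPoly (n : ℕ) : Polynomial R :=
  trunc (n + 1) ((1 - X) ^ (n + 1) * natPowSeries R n)

variable {R}

lemma coeff_one_sub_X_pow (n k : ℕ) :
    coeff k ((1 - X : R⟦X⟧) ^ n) = (-1) ^ k * (n.choose k : R) := by
  have : (1 - X : R⟦X⟧) ^ n = rescale (-1) ((1 + Polynomial.X) ^ n : Polynomial R) := by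
    simp [sub_eq_add_neg]
  rw [this, coeff_rescale, Polynomial.coeff_coe, Polynomial.coeff_one_add_X_pow]

lemma coeff_one_sub_X_pow_mul_natPowSeries (n j : ℕ) :
    coeff j ((1 - X) ^ (n + 1) * natPowSeries R n) =
      ∑ k ∈ range (j + 1), (-1) ^ k * ((n + 1).choose k : R) * ((j - k : ℕ) : R) ^ n := by
  rw [coeff_mul, Nat.sum_antidiagonal_eq_sum_range_succ_mk]
  simp only [coeff_one_sub_X_pow, natPowSeries, coeff_mk]

lemma coeff_one_sub_X_pow_mul_natPowSeries_of_lt {n j : ℕ} (h : n < j) :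
    coeff j ((1 - X) ^ (n + 1) * natPowSeries R n) = 0 := by
  have hΔ := congrFun (fwdDiff_iter_pow_eq_zero_of_lt (R := R) (Nat.lt_succ_self n))
    ((j - (n + 1) : ℕ) : R)
  rw [fwdDiff_iter_eq_sum_shift, Pi.zero_apply] at hΔ
  rw [coeff_one_sub_X_pow_mul_natPowSeries, ← hΔ,
    ← sum_subset (range_subset_range.mpr (by omega : n + 2 ≤ j + 1)), ← sum_range_reflect]
  · refine sum_congr rfl fun k hk ↦ ?_
    have hk := mem_range.mp hk
    rw [show n + 2 - 1 - k = n + 1 - k by omega, Nat.choose_symm (by omega),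
      show j - (n + 1 - k) = j - (n + 1) + k by omega, zsmul_eq_mul, nsmul_eq_mul]
    push_cast
    ring
  · intro k _ hk
    rw [Nat.choose_eq_zero_of_lt (by simp at hk; omega), Nat.cast_zero, mul_zero, zero_mul]

lemma coe_eulerianPoly (n : ℕ) :
    (eulerianPoly R n : R⟦X⟧) = (1 - X) ^ (n + 1) * natPowSeries R n := by
  ext j
  rw [Polynomial.coeff_coe, eulerianPoly, coeff_trunc]
  split_ifs with hj
  · rfl
  · exact (coeff_one_sub_X_pow_mul_natPowSeries_of_lt (by omega)).symm

lemma eulerianPoly_zero : eulerianPoly R 0 = 1 := by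
  rw [eulerianPoly, zero_add, trunc_one_left, coeff_one_sub_X_pow_mul_natPowSeries]
  simp

lemma eval_eulerianPoly {n : ℕ} (hn : n ≠ 0) (x : R) :
    (eulerianPoly R n).eval x = ∑ j ∈ range n, (eulerianNum n j : R) * x ^ (j + 1) := by
  rw [eulerianPoly, Polynomial.eval_eq_sum_range' (natDegree_trunc_lt _ n), sum_range_succ',
    coeff_trunc, if_pos n.succ_pos, coeff_one_sub_X_pow_mul_natPowSeries, sum_range_one,
    Nat.cast_zero, zero_pow hn, mul_zero, zero_mul, add_zero]
  refine sum_congr rfl fun j hj ↦ ?_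
  rw [coeff_trunc, if_pos (by have := mem_range.mp hj; omega),
    coeff_one_sub_X_pow_mul_natPowSeries, sum_range_succ, Nat.sub_self, Nat.cast_zero,
    zero_pow hn, mul_zero, add_zero, eulerianNum]
  push_cast
  congr 1
  refine sum_congr rfl fun k hk ↦ ?_
  rw [show j + 1 - k = j - k + 1 by have := mem_range.mp hk; omega, Nat.cast_succ]

lemma X_mul_sum_choose_mul_natPowSeries {n : ℕ} (hn : n ≠ 0) :
    X * ∑ k ∈ range (n + 1), (n.choose k : R⟦X⟧) * natPowSeries R k = natPowSeries R n := by
  ext j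
  rcases j with _ | j
  · simp [natPowSeries, hn]
  · rw [coeff_succ_X_mul, map_sum]
    simp only [natPowSeries, coeff_mk, ← map_natCast (C (R := R)), coeff_C_mul]
    push_cast
    rw [add_pow]
    refine sum_congr rfl fun k _ ↦ ?_
    ring

lemma X_mul_sum_choose_mul_eulerianPoly {n : ℕ} (hn : n ≠ 0) :
    Polynomial.X * ∑ k ∈ range (n + 1),
      (n.choose k : Polynomial R) * eulerianPoly R k * (1 - Polynomial.X) ^ (n - k) =
      eulerianPoly R n := by
  rw [← Polynomial.coe_inj, ← Polynomial.coeToPowerSeries.ringHom_apply]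
  simp only [map_mul, map_sum, map_pow, map_sub, map_one, map_natCast,
    Polynomial.coeToPowerSeries.ringHom_apply, Polynomial.coe_X, coe_eulerianPoly]
  rw [← X_mul_sum_choose_mul_natPowSeries hn, mul_sum, mul_sum, mul_sum]
  refine sum_congr rfl fun k hk ↦ ?_
  rw [show n + 1 = (n - k) + (k + 1) by have := mem_range.mp hk; omega, pow_add]
  ring

lemma mul_sum_choose_mul_eval_eulerianPoly_div {K : Type*} [Field K] {x : K} (hx : x ≠ 1)
    {n : ℕ} (hn : n ≠ 0) :
    x * ∑ k ∈ range (n + 1), n.choose k * ((eulerianPoly K k).eval x / (1 - x) ^ (k + 1)) =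
      (eulerianPoly K n).eval x / (1 - x) ^ (n + 1) := by
  have h := congrArg (Polynomial.eval x) (X_mul_sum_choose_mul_eulerianPoly (R := K) hn)
  simp only [Polynomial.eval_mul, Polynomial.eval_finsetSum, Polynomial.eval_natCast,
    Polynomial.eval_pow, Polynomial.eval_sub, Polynomial.eval_one, Polynomial.eval_X] at h
  rw [← h, mul_sum, mul_sum, sum_div]
  refine sum_congr rfl fun k hk ↦ ?_
  have hpow : (1 - x) ^ (n + 1) = (1 - x) ^ (n - k) * (1 - x) ^ (k + 1) := by
    rw [← pow_add]; congr 1; have := mem_range.mp hk; omega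
  rw [hpow]
  field_simp

end EulerianPolynomial

section ExponentialGeneratingFunction

variable {K : Type*} [Field K] [CharZero K]

lemma coeff_mk_div_factorial_mul_mk_div_factorial (u v : ℕ → K) (n : ℕ) :
    coeff n ((mk fun k ↦ u k / k !) * mk fun k ↦ v k / k !) =
      (∑ k ∈ range (n + 1), n.choose k * u k * v (n - k)) / n ! := by
  rw [coeff_mul, Nat.sum_antidiagonal_eq_sum_range_succ_mk, sum_div]
  refine sum_congr rfl fun k hk ↦ ?_
  simp only [coeff_mk]
  rw [Nat.cast_choose K (mem_range_succ_iff.mp hk)]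
  have : (n ! : K) ≠ 0 := Nat.cast_ne_zero.mpr n.factorial_ne_zero
  field_simp

lemma exp_eq_mk_one_div_factorial : exp K = mk fun k ↦ 1 / (k ! : K) := by
  ext k
  simp [coeff_exp]

lemma coeff_inv_C_mul_exp_sub_one {x : K} (hx : x ≠ 1) (n : ℕ) :
    coeff n (C x * exp K - 1)⁻¹ = -((eulerianPoly K n).eval x / (1 - x) ^ (n + 1)) / n ! := by
  set r : ℕ → K := fun k ↦ -((eulerianPoly K k).eval x / (1 - x) ^ (k + 1)) with hr
  suffices (C x * exp K - 1)⁻¹ = (mk fun k ↦ r k / k !) by rw [this, coeff_mk]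
  rw [inv_eq_iff_mul_eq_one (by simpa [sub_eq_zero] using hx)]
  ext n
  rw [show (mk fun k ↦ r k / k !) * (C x * exp K - 1) =
      C x * ((mk fun k ↦ r k / k !) * exp K) - (mk fun k ↦ r k / k !) by ring,
    exp_eq_mk_one_div_factorial, map_sub, coeff_C_mul, coeff_mk_div_factorial_mul_mk_div_factorial,
    coeff_mk, coeff_one]
  simp only [mul_one]
  rcases n with _ | n
  · simp only [hr, zero_add, sum_range_one, Nat.choose_self, Nat.cast_one, eulerianPoly_zero,
      Polynomial.eval_one, pow_one, Nat.factorial_zero, div_one, one_mul, if_true]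
    field_simp
    ring
  · simp only [hr, mul_neg, sum_neg_distrib, if_neg n.add_one_ne_zero]
    rw [mul_div_assoc', mul_neg, mul_sum_choose_mul_eval_eulerianPoly_div hx n.add_one_ne_zero]
    ring

end ExponentialGeneratingFunction

section BernoulliPowerSums

variable {K : Type*} [Field K] [CharZero K]

lemma rescale_bernoulliPowerSeries (a : K) :
    rescale a (bernoulliPowerSeries K) = mk fun κ ↦ a ^ κ * bernoulli κ / κ ! := by
  ext κ
  simp [bernoulliPowerSeries, coeff_rescale, mul_div_assoc]

lemma sum_range_pow_C_mul_exp (a : ℕ) (x : K) :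
    ∑ i ∈ range a, (C x * exp K) ^ i = mk fun m ↦ (∑ i ∈ range a, (i : K) ^ m * x ^ i) / m ! := by
  ext m
  rw [coeff_mk, map_sum, sum_div]
  refine sum_congr rfl fun i _ ↦ ?_
  rw [mul_pow, ← map_pow, exp_pow_eq_rescale_exp, coeff_C_mul, coeff_rescale, coeff_exp,
    map_div₀, map_one, map_natCast]
  ring

lemma rescale_bernoulliPowerSeries_mul_sum_range_pow {a : ℕ} {x : K} (hxa : x ^ a = 1)
    (hx : x ≠ 1) :
    rescale (a : K) (bernoulliPowerSeries K) * ∑ i ∈ range a, (C x * exp K) ^ i =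
      C (a : K) * X * (C x * exp K - 1)⁻¹ := by
  rw [eq_mul_inv_iff_mul_eq (by simpa [sub_eq_zero] using hx), mul_assoc, geom_sum_mul, mul_pow,
    ← map_pow, hxa, map_one, one_mul, exp_pow_eq_rescale_exp, ← rescale_X, ← map_one (rescale _),
    ← map_sub, ← map_mul, bernoulliPowerSeries_mul_exp_sub_one]

theorem sum_choose_mul_bernoulli_mul_sum_range_pow {a : ℕ} {x : K} (hxa : x ^ a = 1)
    (hx : x ≠ 1) (m : ℕ) :
    ∑ κ ∈ range (m + 2), ((m + 1).choose κ : K) * bernoulli κ * a ^ κ *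
        ∑ i ∈ range a, (i : K) ^ (m + 1 - κ) * x ^ i =
      -((m + 1) * a * ((eulerianPoly K m).eval x / (1 - x) ^ (m + 1))) := by
  have h := congrArg (coeff (m + 1)) (rescale_bernoulliPowerSeries_mul_sum_range_pow hxa hx)
  rw [rescale_bernoulliPowerSeries, sum_range_pow_C_mul_exp,
    coeff_mk_div_factorial_mul_mk_div_factorial, mul_assoc, coeff_C_mul, coeff_succ_X_mul,
    coeff_inv_C_mul_exp_sub_one hx, div_eq_iff (Nat.cast_ne_zero.mpr (m + 1).factorial_ne_zero),
    Nat.factorial_succ, Nat.cast_mul] at h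
  have hm : (m ! : K) ≠ 0 := Nat.cast_ne_zero.mpr m.factorial_ne_zero
  refine (sum_congr rfl fun κ _ ↦ by ring).trans (h.trans ?_)
  push_cast
  field_simp

end BernoulliPowerSums

/-- For `λ^a = 1`, `λ ≠ 1`:
`−(1/(μ+1))·Σ_{κ=0}^{μ} C(μ+1,κ) B_κ a^{κ−1} Σ_{i=0}^{a−1} i^{μ+1−κ} λ^i
  = ((−1)^{μ+1}/(λ−1)^{μ+1})·Σ_{j=0}^{μ−1} ⟨μ,j⟩ λ^{j+1}`. -/
theorem stmt18 (a : ℕ) (ha : 0 < a) (μ : ℕ) (hμ : 0 < μ)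
    (lam : ℂ) (hla : lam ^ a = 1) (hl1 : lam ≠ 1) :
    -((1 : ℂ) / ((μ : ℂ) + 1)) * ∑ κ ∈ Finset.range (μ + 1),
        ((μ + 1).choose κ : ℂ) * ((bernoulli κ : ℚ) : ℂ) * (a : ℂ) ^ ((κ : ℤ) - 1) *
          ∑ i ∈ Finset.range a, (i : ℂ) ^ (μ + 1 - κ) * lam ^ i =
      ((-1 : ℂ) ^ (μ + 1) / (lam - 1) ^ (μ + 1)) *
        ∑ j ∈ Finset.range μ, (eulerianNum μ j : ℂ) * lam ^ (j + 1) := by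
  have ha0 : (a : ℂ) ≠ 0 := Nat.cast_ne_zero.mpr ha.ne'
  have hgeom : ∑ i ∈ range a, (i : ℂ) ^ 0 * lam ^ i = 0 := by
    simp only [pow_zero, one_mul]
    rw [geom_sum_eq hl1, hla, sub_self, zero_div]
  have key := sum_choose_mul_bernoulli_mul_sum_range_pow hla hl1 μ
  rw [sum_range_succ, Nat.sub_self, hgeom, mul_zero, add_zero, eval_eulerianPoly hμ.ne'] at key
  calc _ = -(1 / ((μ : ℂ) + 1)) * ((∑ κ ∈ range (μ + 1), ((μ + 1).choose κ : ℂ) *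
          ((bernoulli κ : ℚ) : ℂ) * (a : ℂ) ^ κ * ∑ i ∈ range a, (i : ℂ) ^ (μ + 1 - κ) * lam ^ i) *
            (a : ℂ)⁻¹) := by
        rw [sum_mul]
        congr 1
        refine sum_congr rfl fun κ _ ↦ ?_
        rw [zpow_sub_one₀ ha0, zpow_natCast]
        ring
    _ = _ := by
        rw [key, ← neg_sub (1 : ℂ) lam, neg_pow (1 - lam)]
        field_simp
end
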